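/- Let r > 4, 2 < α ≤ 3, and for finite A ⊂ ℤ² let B_ℓ(A) be the union of all ℓ-cubes C with |C ∩ A| ≥ |C|/2. Then there exists b₇ = b₆^{-1}·2^{2r+1} such that for all ℓ ≥ 0, the symmetric difference satisfies |B_ℓ(A) Δ B_{ℓ+1}(A)| ≤ b₇ · 2^{rℓ(α−2)} · Q_ℓ(A). -/

import Mathlib

/-- Long-range interaction in `ℤ²`: `|x - y|^{-α}` with Euclidean distance. -/
noncomputable def Jint2 (α : ℝ) (p q : ℤ × ℤ) : ℝ :=
  (Real.sqrt (((p.1 - q.1 : ℤ) : ℝ) ^ 2 + ((p.2 - q.2 : ℤ) : ℝ) ^ 2)) ^ (-α)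

/-- The cube of side `s` in `ℤ²` with lower corner `s • x`. -/
noncomputable def cube2 (s : ℕ) (x : ℤ × ℤ) : Finset (ℤ × ℤ) :=
  Finset.Ico ((s : ℤ) * x.1) ((s : ℤ) * (x.1 + 1)) ×ˢ
    Finset.Ico ((s : ℤ) * x.2) ((s : ℤ) * (x.2 + 1))

/-- The `ℓ`-cube indexed by `x`, shrunk by an outer layer of thickness `2^{r(ℓ-1)}`. -/
noncomputable def hatcube2 (r ℓ : ℕ) (x : ℤ × ℤ) : Finset (ℤ × ℤ) :=
  Finset.Ico ((2 ^ (r * ℓ) : ℤ) * x.1 + 2 ^ (r * ℓ) / 2 ^ r)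
             ((2 ^ (r * ℓ) : ℤ) * (x.1 + 1) - 2 ^ (r * ℓ) / 2 ^ r) ×ˢ
  Finset.Ico ((2 ^ (r * ℓ) : ℤ) * x.2 + 2 ^ (r * ℓ) / 2 ^ r)
             ((2 ^ (r * ℓ) : ℤ) * (x.2 + 1) - 2 ^ (r * ℓ) / 2 ^ r)

/-- `Q_ℓ(A)`. -/
noncomputable def Qlev (r : ℕ) (α : ℝ) (A : Finset (ℤ × ℤ)) (ℓ : ℕ) : ℝ :=
  ∑' x : ℤ × ℤ, ∑' x' : ℤ × ℤ,
    if |x.1 - x'.1| + |x.2 - x'.2| = 1 ∧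
        (cube2 (2 ^ (r * ℓ)) x).card ≤
          2 * ((cube2 (2 ^ (r * ℓ)) x).filter (· ∈ A)).card ∧
        2 * ((cube2 (2 ^ (r * ℓ)) x').filter (· ∈ A)).card <
          (cube2 (2 ^ (r * ℓ)) x').card
    then ∑ p ∈ (hatcube2 r ℓ x).filter (· ∈ A),
           ∑ q ∈ (hatcube2 r ℓ x').filter (· ∉ A), Jint2 α p q
    else 0

/-- `B_ℓ(A)`: the union of all admissible `ℓ`-cubes. -/
def Blev (r : ℕ) (A : Finset (ℤ × ℤ)) (ℓ : ℕ) : Set (ℤ × ℤ) :=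
  {p | ∃ x : ℤ × ℤ, p ∈ cube2 (2 ^ (r * ℓ)) x ∧
    (cube2 (2 ^ (r * ℓ)) x).card ≤ 2 * ((cube2 (2 ^ (r * ℓ)) x).filter (· ∈ A)).card}

/-!
Write `s = 2^{rℓ}`. A point of `B_ℓ(A) Δ B_{ℓ+1}(A)` lies in an `(ℓ+1)`-cube whose `2^{2r}`
`ℓ`-subcubes are, by pigeonhole, neither all admissible nor all non-admissible; walking along a
row and a column of subcubes then yields an admissible `ℓ`-cube next to a non-admissible one.
Such a pair contributes at least `(s²/4)² (3s)^{-α}` to `Q_ℓ(A)`: for `r ≥ 5` the shrunk cubes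
still hold at least `s²/4` points of `A`, resp. of `Aᶜ`, and all their distances are at most `3s`.
Covering `B_ℓ Δ B_{ℓ+1}` by these `(ℓ+1)`-cubes, each of size `2^{2r} s²`, gives the bound.
-/

open Finset

def cubeIdx (s : ℕ) (p : ℤ × ℤ) : ℤ × ℤ := (p.1 / s, p.2 / s)

section Cubes

variable {s m : ℕ}

lemma mem_cube2_iff_cubeIdx_eq (hs : 0 < s) {p x : ℤ × ℤ} :
    p ∈ cube2 s x ↔ cubeIdx s p = x := by
  have hs' : (0 : ℤ) < s := by exact_mod_cast hs
  simp only [cube2, cubeIdx, mem_product, mem_Ico, Prod.ext_iff, Int.ediv_eq_iff_of_pos hs',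
    mul_comm (s : ℤ), add_one_mul]

lemma mem_cube2_cubeIdx (hs : 0 < s) (p : ℤ × ℤ) : p ∈ cube2 s (cubeIdx s p) :=
  (mem_cube2_iff_cubeIdx_eq hs).2 rfl

lemma card_cube2 (x : ℤ × ℤ) : (cube2 s x).card = s ^ 2 := by
  simp [cube2, Int.card_Ico, mul_add, sq]

lemma pairwiseDisjoint_cube2 (hs : 0 < s) (S : Set (ℤ × ℤ)) : S.PairwiseDisjoint (cube2 s) :=
  fun _ _ _ _ hne => disjoint_left.2 fun _ hp hp' =>
    hne (((mem_cube2_iff_cubeIdx_eq hs).1 hp).symm.trans ((mem_cube2_iff_cubeIdx_eq hs).1 hp'))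

lemma cubeIdx_mul (s m : ℕ) (p : ℤ × ℤ) :
    cubeIdx (s * m) p = cubeIdx m (cubeIdx s p) := by
  simp [cubeIdx, Int.ediv_ediv_of_nonneg (Int.natCast_nonneg s)]

lemma cube2_mul (hs : 0 < s) (hm : 0 < m) (y : ℤ × ℤ) :
    cube2 (s * m) y = (cube2 m y).biUnion (cube2 s) := by
  ext p
  simp only [mem_biUnion, mem_cube2_iff_cubeIdx_eq hs, mem_cube2_iff_cubeIdx_eq hm,
    mem_cube2_iff_cubeIdx_eq (Nat.mul_pos hs hm), cubeIdx_mul, exists_eq_right']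

lemma card_filter_cube2_mul (hs : 0 < s) (hm : 0 < m) (y : ℤ × ℤ) (P : ℤ × ℤ → Prop)
    [DecidablePred P] :
    ((cube2 (s * m) y).filter P).card = ∑ x ∈ cube2 m y, ((cube2 s x).filter P).card := by
  rw [cube2_mul hs hm, filter_biUnion, card_biUnion]
  exact fun x _ x' _ hne =>
    (pairwiseDisjoint_cube2 hs _ (Set.mem_univ x) (Set.mem_univ x') hne).mono
      (filter_subset _ _) (filter_subset _ _)

lemma card_cube2_mul (y : ℤ × ℤ) :
    (cube2 (s * m) y).card = ∑ x ∈ cube2 m y, (cube2 s x).card := by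
  simp only [card_cube2, sum_const, smul_eq_mul]
  ring

lemma card_le_card_image_cubeIdx_mul (hs : 0 < s) (F : Finset (ℤ × ℤ)) :
    F.card ≤ (F.image (cubeIdx s)).card * s ^ 2 :=
  calc F.card ≤ ((F.image (cubeIdx s)).biUnion (cube2 s)).card :=
        card_le_card fun p hp => mem_biUnion.2 ⟨_, mem_image_of_mem _ hp, mem_cube2_cubeIdx hs p⟩
    _ ≤ ∑ y ∈ F.image (cubeIdx s), (cube2 s y).card := card_biUnion_le
    _ = (F.image (cubeIdx s)).card * s ^ 2 := by simp [card_cube2]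

end Cubes

lemma Int.exists_switch_of_le {g : ℤ → Prop} {a b : ℤ} (hab : a ≤ b) (ha : g a) (hb : ¬ g b) :
    ∃ t, a ≤ t ∧ t < b ∧ g t ∧ ¬ g (t + 1) := by
  induction b, hab using Int.leInduction with
  | base => exact absurd ha hb
  | succ n han ih =>
    by_cases hn : g n
    · exact ⟨n, han, by omega, hn, hb⟩
    · obtain ⟨t, hat, htn, ht⟩ := ih hn
      exact ⟨t, hat, by omega, ht⟩

lemma Int.exists_adjacent_switch {g : ℤ → Prop} {a b : ℤ} (ha : g a) (hb : ¬ g b) :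
    ∃ t t', t ∈ Set.uIcc a b ∧ t' ∈ Set.uIcc a b ∧ |t - t'| = 1 ∧ g t ∧ ¬ g t' := by
  simp only [Set.mem_uIcc]
  rcases le_total a b with hab | hba
  · obtain ⟨t, hat, htb, ht, ht'⟩ := Int.exists_switch_of_le hab ha hb
    exact ⟨t, t + 1, by omega, by omega, by simp, ht, ht'⟩
  · -- run the ordered case along the reflection `t ↦ a + b - t`, which swaps `a` and `b`
    obtain ⟨t, hbt, hta, ht, ht'⟩ :=
      Int.exists_switch_of_le (g := fun t => g (a + b - t)) hba (by simpa) (by simpa)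
    refine ⟨a + b - t, a + b - (t + 1), by omega, by omega, ?_, ht, ht'⟩
    rw [show a + b - t - (a + b - (t + 1)) = 1 by ring, abs_one]

lemma exists_adjacent_switch_cube2 (P : ℤ × ℤ → Prop) {m : ℕ} {y x₀ x₁ : ℤ × ℤ}
    (h₀ : x₀ ∈ cube2 m y) (h₁ : x₁ ∈ cube2 m y) (hP₀ : P x₀) (hP₁ : ¬ P x₁) :
    ∃ x x', x ∈ cube2 m y ∧ x' ∈ cube2 m y ∧
      |x.1 - x'.1| + |x.2 - x'.2| = 1 ∧ P x ∧ ¬ P x' := by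
  simp only [cube2, mem_product, mem_Ico] at h₀ h₁ ⊢
  by_cases hc : P (x₁.1, x₀.2)
  · obtain ⟨t, t', ht, ht', htt', hPt, hPt'⟩ :=
      Int.exists_adjacent_switch (g := fun t => P (x₁.1, t)) hc hP₁
    rw [Set.mem_uIcc] at ht ht'
    exact ⟨(x₁.1, t), (x₁.1, t'), by omega, by omega, by simpa using htt', hPt, hPt'⟩
  · obtain ⟨t, t', ht, ht', htt', hPt, hPt'⟩ :=
      Int.exists_adjacent_switch (g := fun t => P (t, x₀.2)) hP₀ hc
    rw [Set.mem_uIcc] at ht ht'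
    exact ⟨(t, x₀.2), (t', x₀.2), by omega, by omega, by simpa using htt', hPt, hPt'⟩

def IsAdmissible (s : ℕ) (A : Finset (ℤ × ℤ)) (x : ℤ × ℤ) : Prop :=
  (cube2 s x).card ≤ 2 * ((cube2 s x).filter (· ∈ A)).card

def admissibleUnion (s : ℕ) (A : Finset (ℤ × ℤ)) : Set (ℤ × ℤ) :=
  {p | ∃ x, p ∈ cube2 s x ∧ IsAdmissible s A x}

lemma Blev_eq_admissibleUnion (r : ℕ) (A : Finset (ℤ × ℤ)) (ℓ : ℕ) :
    Blev r A ℓ = admissibleUnion (2 ^ (r * ℓ)) A := rfl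

section Admissible

variable {s m : ℕ} {A : Finset (ℤ × ℤ)}

lemma mem_admissibleUnion_iff (hs : 0 < s) {p : ℤ × ℤ} :
    p ∈ admissibleUnion s A ↔ IsAdmissible s A (cubeIdx s p) := by
  simp only [admissibleUnion, Set.mem_ofPred_eq, mem_cube2_iff_cubeIdx_eq hs, exists_eq_left']

lemma IsAdmissible.mem_image_cubeIdx (hs : 0 < s) {x : ℤ × ℤ} (h : IsAdmissible s A x) :
    x ∈ A.image (cubeIdx s) := by
  have hpos : 0 < ((cube2 s x).filter (· ∈ A)).card := by
    have := card_cube2 (s := s) x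
    unfold IsAdmissible at h
    have : 0 < s ^ 2 := by positivity
    omega
  obtain ⟨q, hq⟩ := card_pos.1 hpos
  rw [mem_filter, mem_cube2_iff_cubeIdx_eq hs] at hq
  exact mem_image.2 ⟨q, hq.2, hq.1⟩

lemma admissibleUnion_finite (hs : 0 < s) (A : Finset (ℤ × ℤ)) :
    (admissibleUnion s A).Finite :=
  ((A.image (cubeIdx s)).biUnion (cube2 s)).finite_toSet.subset fun p hp =>
    mem_biUnion.2 ⟨cubeIdx s p, ((mem_admissibleUnion_iff hs).1 hp).mem_image_cubeIdx hs,
      mem_cube2_cubeIdx hs p⟩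

lemma IsAdmissible.exists_of_mul (hs : 0 < s) (hm : 0 < m) {y : ℤ × ℤ}
    (h : IsAdmissible (s * m) A y) : ∃ x ∈ cube2 m y, IsAdmissible s A x := by
  by_contra! hnone
  have hne : (cube2 m y).Nonempty := by
    rw [← card_pos, card_cube2]
    positivity
  have hlt : 2 * ((cube2 (s * m) y).filter (· ∈ A)).card < (cube2 (s * m) y).card := by
    rw [card_filter_cube2_mul hs hm, card_cube2_mul, mul_sum]
    exact sum_lt_sum_of_nonempty hne fun x hx => not_le.1 (hnone x hx)
  exact absurd h (not_le.2 hlt)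

lemma exists_not_isAdmissible_of_mul (hs : 0 < s) (hm : 0 < m) {y : ℤ × ℤ}
    (h : ¬ IsAdmissible (s * m) A y) : ∃ x ∈ cube2 m y, ¬ IsAdmissible s A x := by
  by_contra! hall
  refine h ?_
  rw [IsAdmissible, card_filter_cube2_mul hs hm, card_cube2_mul, mul_sum]
  exact sum_le_sum hall

lemma exists_adjacent_switch_of_mem_symmDiff (hs : 0 < s) (hm : 0 < m) {p : ℤ × ℤ}
    (hp : p ∈ symmDiff (admissibleUnion s A) (admissibleUnion (s * m) A)) :
    ∃ x x', x ∈ cube2 m (cubeIdx (s * m) p) ∧ x' ∈ cube2 m (cubeIdx (s * m) p) ∧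
      |x.1 - x'.1| + |x.2 - x'.2| = 1 ∧ IsAdmissible s A x ∧ ¬ IsAdmissible s A x' := by
  have hp_idx : cubeIdx s p ∈ cube2 m (cubeIdx (s * m) p) := by
    rw [mem_cube2_iff_cubeIdx_eq hm, cubeIdx_mul]
  simp only [Set.mem_symmDiff, mem_admissibleUnion_iff hs,
    mem_admissibleUnion_iff (Nat.mul_pos hs hm)] at hp
  rcases hp with ⟨hfine, hcoarse⟩ | ⟨hcoarse, hfine⟩
  · obtain ⟨x₁, hx₁, hna⟩ := exists_not_isAdmissible_of_mul hs hm hcoarse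
    exact exists_adjacent_switch_cube2 _ hp_idx hx₁ hfine hna
  · obtain ⟨x₀, hx₀, ha⟩ := hcoarse.exists_of_mul hs hm
    exact exists_adjacent_switch_cube2 _ hx₀ hp_idx ha hfine

end Admissible

lemma card_le_four_mul_card_filter {α : Type*} [DecidableEq α] {C H : Finset α} (P : α → Prop)
    [DecidablePred P] (hC : C.card ≤ 2 * (C.filter P).card) (hCH : 8 * (C \ H).card ≤ C.card) :
    C.card ≤ 4 * (H.filter P).card := by
  have hsplit : (C.filter P).card ≤ (H.filter P).card + (C \ H).card := by
    refine (card_le_card fun p hp => ?_).trans (card_union_le _ _)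
    rw [mem_filter] at hp
    by_cases hpH : p ∈ H
    · exact mem_union_left _ (mem_filter.2 ⟨hpH, hp.2⟩)
    · exact mem_union_right _ (mem_sdiff.2 ⟨hp.1, hpH⟩)
  omega

section HatCube

variable {r ℓ : ℕ}

lemma hatcube2_subset_cube2 (x : ℤ × ℤ) : hatcube2 r ℓ x ⊆ cube2 (2 ^ (r * ℓ)) x := by
  have ht : 0 ≤ (2 : ℤ) ^ (r * ℓ) / 2 ^ r := Int.ediv_nonneg (by positivity) (by positivity)
  apply product_subset_product <;> apply Ico_subset_Ico <;> push_cast <;> omega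

lemma eight_mul_card_cube2_sdiff_hatcube2 (hr : 5 ≤ r) (x : ℤ × ℤ) :
    8 * (cube2 (2 ^ (r * ℓ)) x \ hatcube2 r ℓ x).card ≤ (cube2 (2 ^ (r * ℓ)) x).card := by
  set S : ℤ := 2 ^ (r * ℓ)
  set t : ℤ := S / 2 ^ r
  have ht : 0 ≤ t := Int.ediv_nonneg (by positivity) (by positivity)
  have h32t : 32 * t ≤ S := by
    have h32 : (32 : ℤ) ≤ 2 ^ r := by
      calc (32 : ℤ) = 2 ^ 5 := by norm_num
        _ ≤ 2 ^ r := pow_le_pow_right₀ (by norm_num) hr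
    nlinarith [Int.ediv_mul_le S (show (2 : ℤ) ^ r ≠ 0 by positivity)]
  have hhat : ((hatcube2 r ℓ x).card : ℤ) = (S - 2 * t) ^ 2 := by
    simp only [hatcube2, card_product, Int.card_Ico]
    rw [show S * (x.1 + 1) - t - (S * x.1 + t) = S - 2 * t by ring,
      show S * (x.2 + 1) - t - (S * x.2 + t) = S - 2 * t by ring]
    push_cast [Int.toNat_of_nonneg (show 0 ≤ S - 2 * t by omega)]
    ring
  have hcube : ((cube2 (2 ^ (r * ℓ)) x).card : ℤ) = S ^ 2 := by
    rw [card_cube2]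
    push_cast
    rfl
  rw [card_sdiff_of_subset (hatcube2_subset_cube2 x)]
  have hle := card_le_card (hatcube2_subset_cube2 (r := r) (ℓ := ℓ) x)
  zify [hle]
  rw [hhat, hcube]
  -- `S² - (S - 2t)² ≤ 4 S t ≤ S² / 8`
  nlinarith

end HatCube

lemma abs_sub_lt_two_mul_of_mem_Ico {s a b u v : ℤ} (huv : |u - v| ≤ 1)
    (ha : s * u ≤ a ∧ a < s * (u + 1)) (hb : s * v ≤ b ∧ b < s * (v + 1)) :
    |a - b| < 2 * s := by
  have hs : 0 < s := by nlinarith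
  rw [abs_le] at huv
  rw [abs_lt]
  constructor <;> nlinarith

section Interaction

variable {α : ℝ} {s : ℕ} {x x' : ℤ × ℤ}

-- Points of two adjacent cubes of side `s` are at distance between `1` and `3 s`.
lemma rpow_neg_le_Jint2 (hα : 0 ≤ α) (hs : 0 < s) (hadj : |x.1 - x'.1| + |x.2 - x'.2| = 1)
    {p q : ℤ × ℤ} (hp : p ∈ cube2 s x) (hq : q ∈ cube2 s x') :
    (3 * (s : ℝ)) ^ (-α) ≤ Jint2 α p q := by
  have hpq : p ≠ q := by
    rintro rfl
    rw [mem_cube2_iff_cubeIdx_eq hs] at hp hq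
    rw [← hp, ← hq] at hadj
    simp at hadj
  have hd1 : |p.1 - q.1| < 2 * s := by
    simp only [cube2, mem_product, mem_Ico] at hp hq
    exact abs_sub_lt_two_mul_of_mem_Ico (by have := abs_nonneg (x.2 - x'.2); omega) hp.1 hq.1
  have hd2 : |p.2 - q.2| < 2 * s := by
    simp only [cube2, mem_product, mem_Ico] at hp hq
    exact abs_sub_lt_two_mul_of_mem_Ico (by have := abs_nonneg (x.1 - x'.1); omega) hp.2 hq.2
  have hd_pos : 0 < (p.1 - q.1) ^ 2 + (p.2 - q.2) ^ 2 := by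
    by_contra! h
    have h1 : (p.1 - q.1) ^ 2 = 0 := by nlinarith [sq_nonneg (p.1 - q.1), sq_nonneg (p.2 - q.2)]
    have h2 : (p.2 - q.2) ^ 2 = 0 := by nlinarith [sq_nonneg (p.1 - q.1), sq_nonneg (p.2 - q.2)]
    exact hpq (Prod.ext (by simpa [sub_eq_zero] using h1) (by simpa [sub_eq_zero] using h2))
  have hd_le : (p.1 - q.1) ^ 2 + (p.2 - q.2) ^ 2 ≤ (3 * s) ^ 2 := by
    nlinarith [sq_abs (p.1 - q.1), sq_abs (p.2 - q.2), abs_nonneg (p.1 - q.1),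
      abs_nonneg (p.2 - q.2)]
  have hd_pos' : (0 : ℝ) < ((p.1 - q.1 : ℤ) : ℝ) ^ 2 + ((p.2 - q.2 : ℤ) : ℝ) ^ 2 := by
    exact_mod_cast hd_pos
  have hd_le' : ((p.1 - q.1 : ℤ) : ℝ) ^ 2 + ((p.2 - q.2 : ℤ) : ℝ) ^ 2 ≤ (3 * s) ^ 2 := by
    exact_mod_cast hd_le
  exact Real.rpow_le_rpow_of_nonpos (Real.sqrt_pos.2 hd_pos')
    ((Real.sqrt_le_left (by positivity)).2 hd_le') (neg_nonpos.2 hα)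

lemma card_mul_card_mul_le_sum_Jint2 (hα : 0 ≤ α) (hs : 0 < s)
    (hadj : |x.1 - x'.1| + |x.2 - x'.2| = 1) {P Q : Finset (ℤ × ℤ)} (hP : P ⊆ cube2 s x)
    (hQ : Q ⊆ cube2 s x') :
    (P.card * Q.card : ℝ) * (3 * (s : ℝ)) ^ (-α) ≤ ∑ p ∈ P, ∑ q ∈ Q, Jint2 α p q := by
  rw [← sum_product' (f := fun p q => Jint2 α p q)]
  have := card_nsmul_le_sum (P ×ˢ Q) (fun pq => Jint2 α pq.1 pq.2) _ fun pq hpq =>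
    rpow_neg_le_Jint2 hα hs hadj (hP (mem_product.1 hpq).1) (hQ (mem_product.1 hpq).2)
  simpa [card_product, nsmul_eq_mul] using this

end Interaction

noncomputable def qlevTerm (r : ℕ) (α : ℝ) (A : Finset (ℤ × ℤ)) (ℓ : ℕ) (x x' : ℤ × ℤ) : ℝ :=
  if |x.1 - x'.1| + |x.2 - x'.2| = 1 ∧
      (cube2 (2 ^ (r * ℓ)) x).card ≤
        2 * ((cube2 (2 ^ (r * ℓ)) x).filter (· ∈ A)).card ∧
      2 * ((cube2 (2 ^ (r * ℓ)) x').filter (· ∈ A)).card <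
        (cube2 (2 ^ (r * ℓ)) x').card
  then ∑ p ∈ (hatcube2 r ℓ x).filter (· ∈ A),
         ∑ q ∈ (hatcube2 r ℓ x').filter (· ∉ A), Jint2 α p q
  else 0

section Qlev

variable {r ℓ : ℕ} {α : ℝ} {A : Finset (ℤ × ℤ)}

lemma Qlev_eq_tsum_qlevTerm : Qlev r α A ℓ = ∑' x, ∑' x', qlevTerm r α A ℓ x x' := rfl

lemma qlevTerm_nonneg (x x' : ℤ × ℤ) : 0 ≤ qlevTerm r α A ℓ x x' := by
  unfold qlevTerm Jint2
  split_ifs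
  · exact sum_nonneg fun _ _ => sum_nonneg fun _ _ => Real.rpow_nonneg (Real.sqrt_nonneg _) _
  · exact le_rfl

lemma summable_qlevTerm (x : ℤ × ℤ) : Summable (qlevTerm r α A ℓ x) := by
  refine summable_of_ne_finset_zero (s := Icc (x.1 - 1, x.2 - 1) (x.1 + 1, x.2 + 1))
    fun x' hx' => ?_
  rw [qlevTerm, if_neg]
  rintro ⟨hadj, -⟩
  refine hx' (mem_Icc.2 ⟨⟨?_, ?_⟩, ⟨?_, ?_⟩⟩) <;>
    cases abs_cases (x.1 - x'.1) <;> cases abs_cases (x.2 - x'.2) <;> omega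

lemma summable_tsum_qlevTerm : Summable fun x => ∑' x', qlevTerm r α A ℓ x x' := by
  refine summable_of_ne_finset_zero (s := A.image (cubeIdx (2 ^ (r * ℓ)))) fun x hx => ?_
  refine (tsum_congr fun x' => if_neg ?_).trans tsum_zero
  exact fun ⟨_, hadm, _⟩ => hx (IsAdmissible.mem_image_cubeIdx (by positivity) hadm)

lemma le_qlevTerm (hr : 5 ≤ r) (hα : 0 ≤ α) {x x' : ℤ × ℤ}
    (hadj : |x.1 - x'.1| + |x.2 - x'.2| = 1) (hx : IsAdmissible (2 ^ (r * ℓ)) A x)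
    (hx' : ¬ IsAdmissible (2 ^ (r * ℓ)) A x') :
    ((2 ^ (r * ℓ) : ℕ) : ℝ) ^ 4 / 16 * (3 * ((2 ^ (r * ℓ) : ℕ) : ℝ)) ^ (-α) ≤
      qlevTerm r α A ℓ x x' := by
  rw [qlevTerm, if_pos ⟨hadj, hx, not_le.1 hx'⟩]
  have hx'_compl : (cube2 (2 ^ (r * ℓ)) x').card ≤
      2 * ((cube2 (2 ^ (r * ℓ)) x').filter (· ∉ A)).card := by
    have := card_filter_add_card_filter_not (s := cube2 (2 ^ (r * ℓ)) x') (· ∈ A)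
    unfold IsAdmissible at hx'
    omega
  have hP := card_le_four_mul_card_filter _ hx (eight_mul_card_cube2_sdiff_hatcube2 hr x)
  have hQ := card_le_four_mul_card_filter _ hx'_compl (eight_mul_card_cube2_sdiff_hatcube2 hr x')
  rw [card_cube2] at hP hQ
  have hP' : ((2 ^ (r * ℓ) : ℕ) : ℝ) ^ 2 ≤ 4 * ((hatcube2 r ℓ x).filter (· ∈ A)).card := by
    exact_mod_cast hP
  have hQ' : ((2 ^ (r * ℓ) : ℕ) : ℝ) ^ 2 ≤ 4 * ((hatcube2 r ℓ x').filter (· ∉ A)).card := by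
    exact_mod_cast hQ
  refine le_trans ?_ (card_mul_card_mul_le_sum_Jint2 hα (by positivity) hadj
    ((filter_subset _ _).trans (hatcube2_subset_cube2 x))
    ((filter_subset _ _).trans (hatcube2_subset_cube2 x')))
  rw [show ((2 ^ (r * ℓ) : ℕ) : ℝ) ^ 4 / 16 =
    ((2 ^ (r * ℓ) : ℕ) : ℝ) ^ 2 / 4 * (((2 ^ (r * ℓ) : ℕ) : ℝ) ^ 2 / 4) by ring]
  gcongr <;> linarith

lemma card_mul_le_Qlev (hr : 5 ≤ r) (hα : 0 ≤ α) (T : Finset (ℤ × ℤ))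
    (hT : ∀ y ∈ T, ∃ x x', x ∈ cube2 (2 ^ r) y ∧ x' ∈ cube2 (2 ^ r) y ∧
      |x.1 - x'.1| + |x.2 - x'.2| = 1 ∧ IsAdmissible (2 ^ (r * ℓ)) A x ∧
      ¬ IsAdmissible (2 ^ (r * ℓ)) A x') :
    T.card * (((2 ^ (r * ℓ) : ℕ) : ℝ) ^ 4 / 16 * (3 * ((2 ^ (r * ℓ) : ℕ) : ℝ)) ^ (-α)) ≤
      Qlev r α A ℓ := by
  rw [Qlev_eq_tsum_qlevTerm]
  set c := ((2 ^ (r * ℓ) : ℕ) : ℝ) ^ 4 / 16 * (3 * ((2 ^ (r * ℓ) : ℕ) : ℝ)) ^ (-α)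
  set F := fun x => ∑' x', qlevTerm r α A ℓ x x'
  have hF_nonneg : ∀ x, 0 ≤ F x := fun x => tsum_nonneg (qlevTerm_nonneg x)
  have hT_le : ∀ y ∈ T, c ≤ ∑ x ∈ cube2 (2 ^ r) y, F x := by
    intro y hy
    obtain ⟨x, x', hx, -, hadj, hadm, hnadm⟩ := hT y hy
    calc c ≤ qlevTerm r α A ℓ x x' := le_qlevTerm hr hα hadj hadm hnadm
      _ ≤ F x := (summable_qlevTerm x).le_tsum x' fun _ _ => qlevTerm_nonneg _ _
      _ ≤ ∑ x ∈ cube2 (2 ^ r) y, F x := single_le_sum (f := F) (fun _ _ => hF_nonneg _) hx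
  calc T.card * c ≤ ∑ y ∈ T, ∑ x ∈ cube2 (2 ^ r) y, F x := by
        simpa [nsmul_eq_mul] using card_nsmul_le_sum T _ c hT_le
    _ = ∑ x ∈ T.biUnion (cube2 (2 ^ r)), F x :=
        (sum_biUnion (pairwiseDisjoint_cube2 (by positivity) _)).symm
    _ ≤ ∑' x, F x := summable_tsum_qlevTerm.sum_le_tsum _ fun _ _ => hF_nonneg _

end Qlev

lemma sq_mul_two_pow_le {σ : ℝ} (hσ : 0 < σ) (α : ℝ) (r : ℕ) :
    (σ * 2 ^ r) ^ 2 ≤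
      16 * 3 ^ α * 2 ^ (2 * r + 1) * σ ^ (α - 2) * (σ ^ 4 / 16 * (3 * σ) ^ (-α)) := by
  rw [Real.rpow_neg (by positivity), Real.mul_rpow (by norm_num) hσ.le,
    Real.rpow_sub hσ, Real.rpow_two]
  field_simp
  rw [← pow_mul]
  exact pow_le_pow_right₀ (by norm_num) (by omega)

theorem stmt13_general (r : ℕ) (hr : 4 < r) (α : ℝ) (hα1 : 2 < α)
    (A : Finset (ℤ × ℤ)) (ℓ : ℕ) :
    ((symmDiff (Blev r A ℓ) (Blev r A (ℓ + 1))).ncard : ℝ) ≤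
      (16 * 3 ^ α * (2 : ℝ) ^ (2 * r + 1)) *
        (2 : ℝ) ^ (((r * ℓ : ℕ) : ℝ) * (α - 2)) * Qlev r α A ℓ := by
  set s := 2 ^ (r * ℓ) with hs_def
  have hs : 0 < s := by positivity
  have hD : symmDiff (Blev r A ℓ) (Blev r A (ℓ + 1)) =
      symmDiff (admissibleUnion s A) (admissibleUnion (s * 2 ^ r) A) := by
    rw [Blev_eq_admissibleUnion, Blev_eq_admissibleUnion, mul_add, mul_one, pow_add]
  rw [hD]
  have hfin : (symmDiff (admissibleUnion s A) (admissibleUnion (s * 2 ^ r) A)).Finite :=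
    ((admissibleUnion_finite hs A).union (admissibleUnion_finite (by positivity) A)).subset
      symmDiff_le_sup
  set T := hfin.toFinset.image (cubeIdx (s * 2 ^ r))
  have hcount : (hfin.toFinset.card : ℝ) ≤ T.card * ((s : ℝ) * 2 ^ r) ^ 2 := by
    exact_mod_cast card_le_card_image_cubeIdx_mul (by positivity) _
  have hQ := card_mul_le_Qlev (ℓ := ℓ) (A := A) hr (show 0 ≤ α by linarith) T fun y hy => by
    obtain ⟨p, hp, rfl⟩ := mem_image.1 hy
    exact exists_adjacent_switch_of_mem_symmDiff hs (by positivity) (hfin.mem_toFinset.1 hp)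
  have hexp : (2 : ℝ) ^ (((r * ℓ : ℕ) : ℝ) * (α - 2)) = (s : ℝ) ^ (α - 2) := by
    rw [Real.rpow_mul (by norm_num), Real.rpow_natCast, hs_def, Nat.cast_pow, Nat.cast_ofNat]
  rw [Set.ncard_eq_toFinset_card _ hfin]
  calc _ ≤ T.card * ((s : ℝ) * 2 ^ r) ^ 2 := hcount
    _ ≤ T.card * (16 * 3 ^ α * 2 ^ (2 * r + 1) * (s : ℝ) ^ (α - 2) *
          ((s : ℝ) ^ 4 / 16 * (3 * (s : ℝ)) ^ (-α))) := by
        gcongr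
        exact sq_mul_two_pow_le (by positivity) α r
    _ ≤ _ := by
        rw [hexp, mul_left_comm]
        gcongr

theorem stmt13 (r : ℕ) (hr : 4 < r) (α : ℝ) (hα1 : 2 < α) (hα2 : α ≤ 3)
    (A : Finset (ℤ × ℤ)) (ℓ : ℕ) :
    ((symmDiff (Blev r A ℓ) (Blev r A (ℓ + 1))).ncard : ℝ) ≤
      (16 * 3 ^ α * (2 : ℝ) ^ (2 * r + 1)) *
        (2 : ℝ) ^ (((r * ℓ : ℕ) : ℝ) * (α - 2)) * Qlev r α A ℓ :=
  stmt13_general r hr α hα1 A ℓ
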